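/- arXiv:1804.08761 — 3 statements merged into one kernel-verified Lean document; each statement's English description precedes it below -/
import Mathlib

section
/- If d is a real algebraic integer with d ≥ 1, and there exists a Galois conjugate f of d such that 1/d² + 1/f² ≤ (1/2)(1 + 1/f), then d ≥ 4/3; moreover equality is impossible, so d > 4/3. -/
/-- If `d` is a real algebraic integer with `d ≥ 1`, and there exists a Galois
conjugate `f` of `d` (a root of the minimal polynomial of `d` over `ℚ`) such that
`1/d² + 1/f² ≤ (1/2)(1 + 1/f)`, then `d > 4/3`. -/
theorem stmt_0 (d f : ℝ) (hd_int : IsIntegral ℤ d) (hd1 : 1 ≤ d)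
    (hf_conj : Polynomial.aeval f (minpoly ℚ d) = 0)
    (hineq : 1 / d ^ 2 + 1 / f ^ 2 ≤ (1 / 2) * (1 + 1 / f)) :
    d > 4 / 3 := by
  have hd0 : (0:ℝ) < d := lt_of_lt_of_le one_pos hd1
  have hfp : 1 / f ^ 2 = (1/f)^2 := by rw [div_pow]; norm_num
  rw [hfp] at hineq
  have h1 : 1 / d ^ 2 ≤ 9 / 16 := by nlinarith [sq_nonneg (1/f - 1/4)]
  have hd2 : (0:ℝ) < d ^ 2 := by positivity
  have h16 : (16:ℝ) ≤ 9 * d ^ 2 := by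
    rw [div_le_div_iff₀ hd2 (by norm_num)] at h1; linarith
  have h2 : (4/3:ℝ) ≤ d := by nlinarith
  rcases h2.lt_or_eq with h | h
  · exact h
  · exfalso
    rw [← h] at hd_int
    have heq : ((4/3 : ℚ) : ℝ) = algebraMap ℚ ℝ (4/3 : ℚ) := rfl
    have hInt : IsIntegral ℤ (4/3 : ℚ) := by
      apply IsIntegral.tower_bot (algebraMap ℚ ℝ).injective
      rw [← heq]; push_cast; exact hd_int
    obtain ⟨n, hn⟩ := IsIntegrallyClosed.isIntegral_iff.mp hInt
    have : (n : ℚ) = 4/3 := hn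
    have h3 : (3 * n : ℚ) = 4 := by rw [this]; ring
    have : (3 * n : ℤ) = 4 := by exact_mod_cast h3
    omega
end

section
/- If d is a real number with d ≥ 1, k ≥ 2 is an integer, and there exists f ≥ 1 such that 1/d² + (k-1)/f² ≤ (1/2)(1 + 1/f), then d ≥ √((16k-16)/(8k-7)). -/
/-! With `K = k - 1` and `t = 1/f`, the hypothesis reads `1/d² ≤ 1/2 + t/2 - K t²`, and the
right-hand side is at most its maximum `1/2 + 1/(16K) = (8k-7)/(16k-16)`, attained at
`t = 1/(4K)`. -/

theorem mul_sub_mul_sq_le_sq_div {K : ℝ} (hK : 0 < K) (a t : ℝ) :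
    a * t - K * t ^ 2 ≤ a ^ 2 / (4 * K) := by
  rw [le_div_iff₀ (by positivity)]
  nlinarith [sq_nonneg (a - 2 * K * t)]

/-- If `d ≥ 1` is real, `k ≥ 2` an integer, and there exists `f ≥ 1` with
`1/d² + (k-1)/f² ≤ (1/2)(1 + 1/f)`, then `d ≥ √((16k-16)/(8k-7))`. -/
theorem stmt_2 (d : ℝ) (k : ℤ) (hd : 1 ≤ d) (hk : 2 ≤ k)
    (h : ∃ f : ℝ, 1 ≤ f ∧ 1 / d ^ 2 + ((k : ℝ) - 1) / f ^ 2 ≤ (1 / 2) * (1 + 1 / f)) :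
    d ≥ Real.sqrt ((16 * (k : ℝ) - 16) / (8 * (k : ℝ) - 7)) := by
  obtain ⟨f, -, hf⟩ := h
  have hk' : (2 : ℝ) ≤ k := by exact_mod_cast hk
  have hK : (0 : ℝ) < k - 1 := by linarith
  have inv_sq_le : 1 / d ^ 2 ≤ (8 * (k : ℝ) - 7) / (16 * (k : ℝ) - 16) :=
    calc 1 / d ^ 2 ≤ 1 / 2 + (1 / 2 * (1 / f) - ((k : ℝ) - 1) * (1 / f) ^ 2) := by
          have hKf : ((k : ℝ) - 1) / f ^ 2 = ((k : ℝ) - 1) * (1 / f) ^ 2 := by ring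
          linarith
      _ ≤ 1 / 2 + (1 / 2) ^ 2 / (4 * ((k : ℝ) - 1)) := by
          gcongr; exact mul_sub_mul_sq_le_sq_div hK _ _
      _ = (8 * (k : ℝ) - 7) / (16 * (k : ℝ) - 16) := by
          field_simp; ring
  have sq_ge : (16 * (k : ℝ) - 16) / (8 * (k : ℝ) - 7) ≤ d ^ 2 := by
    rw [one_div_le (by positivity) (div_pos (by linarith) (by linarith))] at inv_sq_le
    simpa only [one_div_div] using inv_sq_le
  exact Real.sqrt_le_iff.mpr ⟨by linarith, sq_ge⟩
end

section
/- Let d be a real quadratic algebraic integer with 1 < d < √2 and conjugate d* ≥ d satisfying 1/d² ≤ 9/16 - (1/4 - 1/d*)², and suppose d > 4/3. Then (3d - 4)(3d* - 4) ≥ 1 implies d ≥ (√41 - 1)/4. -/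
/-!
Write `d*` for `ds`. Since `3d - 4 > 0`, the hypothesis `(3d - 4)(3d* - 4) ≥ 1` gives
`1/d* ≤ (3d - 4)/(4d - 5)`, and below `d = 11/8` the right-hand side is at most `1/4`, so
`(1/4 - 1/d*)² ≥ (1/4 - (3d - 4)/(4d - 5))²`. Feeding this into the bound on `1/d²` and clearing
denominators leaves `(2d² + d - 5)(5d² - 14d + 10) ≥ 0`. The second factor has no real roots,
so `2d² + d - 5 ≥ 0`, i.e. `d ≥ (√41 - 1)/4`.
-/

lemma two_mul_sq_add_sub_five_neg {d : ℝ} (hd : 0 ≤ d) (h : d < (Real.sqrt 41 - 1) / 4) :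
    2 * d ^ 2 + d - 5 < 0 := by
  have hsq : Real.sqrt 41 ^ 2 = 41 := Real.sq_sqrt (by norm_num)
  nlinarith [Real.sqrt_nonneg 41]

lemma one_div_le_of_one_le_mul {d e : ℝ} (hd : 4 / 3 < d)
    (hprod : 1 ≤ (3 * d - 4) * (3 * e - 4)) :
    1 / e ≤ (3 * d - 4) / (4 * d - 5) := by
  have he : 4 / 3 < e := by nlinarith
  rw [div_le_div_iff₀ (by linarith) (by linarith)]
  nlinarith

lemma div_le_one_div_four {d : ℝ} (hd : 4 / 3 < d) (hd' : d ≤ 11 / 8) :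
    (3 * d - 4) / (4 * d - 5) ≤ 1 / 4 := by
  rw [div_le_div_iff₀ (by linarith) (by norm_num)]
  linarith

lemma nine_div_sixteen_lt {d : ℝ} (hd : 4 / 3 < d) (hq : 2 * d ^ 2 + d - 5 < 0) :
    9 / 16 < 1 / d ^ 2 + (1 / 4 - (3 * d - 4) / (4 * d - 5)) ^ 2 := by
  have h45 : 0 < 4 * d - 5 := by linarith
  have hpos : 0 < 5 * d ^ 2 - 14 * d + 10 := by nlinarith [sq_nonneg (5 * d - 7)]
  have hkey : 9 * d ^ 2 * (4 * d - 5) ^ 2 <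
      16 * (4 * d - 5) ^ 2 + d ^ 2 * (11 - 8 * d) ^ 2 := by
    nlinarith [mul_neg_of_neg_of_pos hq hpos]
  have hsub : 1 / 4 - (3 * d - 4) / (4 * d - 5) = (11 - 8 * d) / (4 * (4 * d - 5)) := by
    field_simp
    ring
  rw [hsub, div_pow, div_add_div _ _ (by positivity) (by positivity),
    lt_div_iff₀ (by positivity)]
  linarith

theorem stmt_10_general (d ds : ℝ)
    (hK : 1 / d ^ 2 ≤ 9 / 16 - (1 / 4 - 1 / ds) ^ 2)
    (h43 : 4 / 3 < d)
    (hprod : 1 ≤ (3 * d - 4) * (3 * ds - 4)) :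
    (Real.sqrt 41 - 1) / 4 ≤ d := by
  by_contra! hlt
  have hq := two_mul_sq_add_sub_five_neg (by linarith) hlt
  have h118 : d ≤ 11 / 8 := by nlinarith
  have hinv := one_div_le_of_one_le_mul h43 hprod
  have hsq : (1 / 4 - (3 * d - 4) / (4 * d - 5)) ^ 2 ≤ (1 / 4 - 1 / ds) ^ 2 :=
    pow_le_pow_left₀ (sub_nonneg.mpr (div_le_one_div_four h43 h118)) (by linarith) 2
  linarith [nine_div_sixteen_lt h43 hq]

/-- Let `d` be a real quadratic algebraic integer with `1 < d < √2`, with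
conjugate `d* ≥ d` satisfying `1/d² ≤ 9/16 - (1/4 - 1/d*)²`, and suppose
`d > 4/3`. Then `(3d - 4)(3d* - 4) ≥ 1` implies `d ≥ (√41 - 1)/4`. -/
theorem stmt_10 (d ds : ℝ) (hd_int : IsIntegral ℤ d)
    (hdeg : (minpoly ℚ d).natDegree = 2)
    (hconj : Polynomial.aeval ds (minpoly ℚ d) = 0)
    (h1 : 1 < d) (h2 : d < Real.sqrt 2) (hds : d ≤ ds)
    (hK : 1 / d ^ 2 ≤ 9 / 16 - (1 / 4 - 1 / ds) ^ 2)
    (h43 : 4 / 3 < d)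
    (hprod : 1 ≤ (3 * d - 4) * (3 * ds - 4)) :
    (Real.sqrt 41 - 1) / 4 ≤ d :=
  stmt_10_general d ds hK h43 hprod
end
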